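/- Let f : ℝ → ℂ be defined by f(x) = Σ_{k=1}^∞ 2^{−k} e^{2πi 2^k x}. Then there exists an absolute constant C such that |f(x+y) + f(x−y) − 2f(x)| ≤ C|y| for all x, y ∈ ℝ. -/

import Mathlib

/-- The lacunary series `f(x) = Σ_{k=1}^∞ 2^{−k} e^{2πi 2^k x}`. -/
noncomputable def lacunary (x : ℝ) : ℂ :=
  ∑' k : ℕ, ((1 : ℂ) / 2) ^ (k + 1) *
    Complex.exp (2 * Real.pi * Complex.I * (2 : ℂ) ^ (k + 1) * x)

/-!
A single term `c e^{iθx}` has second difference `c e^{iθx} (2 cos θy - 2)`, of norm at most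
`|c| min(θ²y², 4)`. For the `k`-th term of `lacunary` this gives the two bounds `8π² 2^k y²` and
`2 / 2^k`. Summing the first over the `k` with `2^k |y| ≤ 1` and the second over the remaining `k`
gives two geometric series, each of size `O(|y|)`.
-/

open Complex

section Dyadic

variable {g : ℕ → ℝ} {b : ℝ}

lemma summable_of_nonneg_of_le_div_two_pow (hg0 : ∀ k, 0 ≤ g k) (hb : ∀ k, g k ≤ b / 2 ^ k) :
    Summable g :=
  .of_nonneg_of_le hg0 hb (by simpa using (summable_geometric_two' (2 * b)))

lemma tsum_le_of_le_mul_two_pow_of_le_div_two_pow {a : ℝ} (N : ℕ) (hg0 : ∀ k, 0 ≤ g k)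
    (ha : ∀ k, g k ≤ a * 2 ^ k) (hb : ∀ k, g k ≤ b / 2 ^ k) :
    ∑' k, g k ≤ a * (2 ^ N - 1) + 2 * b / 2 ^ N := by
  have hg := summable_of_nonneg_of_le_div_two_pow hg0 hb
  have head : ∑ k ∈ Finset.range N, g k ≤ a * (2 ^ N - 1) :=
    calc ∑ k ∈ Finset.range N, g k ≤ ∑ k ∈ Finset.range N, a * 2 ^ k :=
          Finset.sum_le_sum fun k _ => ha k
      _ = a * (2 ^ N - 1) := by rw [← Finset.mul_sum, geom_sum_eq (by norm_num)]; ring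
  have tail : ∑' k, g (k + N) ≤ 2 * b / 2 ^ N :=
    calc ∑' k, g (k + N) ≤ ∑' k, (2 * b / 2 ^ N) / 2 / 2 ^ k :=
          (hg.comp_injective (add_left_injective N)).tsum_le_tsum
            (fun k => (hb (k + N)).trans_eq (by rw [pow_add]; field_simp))
            (summable_geometric_two' _)
      _ = 2 * b / 2 ^ N := tsum_geometric_two' _
  rw [← hg.sum_add_tsum_nat_add N]
  exact add_le_add head tail

lemma tsum_le_mul_abs_of_le_two_pow_mul_sq {A y : ℝ} (hg0 : ∀ k, 0 ≤ g k)
    (hA : ∀ k, g k ≤ A * 2 ^ k * y ^ 2) (hB : ∀ k, g k ≤ b / 2 ^ k) :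
    ∑' k, g k ≤ (A + 4 * b) * |y| := by
  rcases eq_or_ne y 0 with rfl | hy
  · simpa using tsum_nonpos fun k => by simpa using hA k
  have hy0 : 0 < |y| := abs_pos.2 hy
  have hA0 : 0 ≤ A := by
    have := (hg0 0).trans (hA 0)
    simp only [pow_zero, mul_one] at this
    exact nonneg_of_mul_nonneg_left this (by positivity)
  have hb0 : 0 ≤ b := by simpa using (hg0 0).trans (hB 0)
  have ha (k : ℕ) : g k ≤ A * y ^ 2 * 2 ^ k := (hA k).trans_eq (by ring)
  rcases le_or_gt 1 |y| with hy1 | hy1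
  · calc ∑' k, g k ≤ A * y ^ 2 * (2 ^ 0 - 1) + 2 * b / 2 ^ 0 :=
          tsum_le_of_le_mul_two_pow_of_le_div_two_pow 0 hg0 ha hB
      _ ≤ (A + 4 * b) * |y| := by nlinarith
  obtain ⟨N, hN, hN1⟩ := exists_nat_pow_near (one_le_one_div hy0 hy1.le) one_lt_two
  rw [le_div_iff₀ hy0] at hN
  rw [div_lt_iff₀ hy0, pow_succ] at hN1
  have h2N : (0 : ℝ) < 2 ^ N := by positivity
  calc ∑' k, g k ≤ A * y ^ 2 * (2 ^ N - 1) + 2 * b / 2 ^ N :=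
        tsum_le_of_le_mul_two_pow_of_le_div_two_pow N hg0 ha hB
    _ ≤ A * |y| + 4 * b * |y| := by
        gcongr ?_ + ?_
        · rw [← sq_abs]; nlinarith [mul_nonneg hA0 hy0.le]
        · rw [div_le_iff₀ h2N]; nlinarith
    _ = (A + 4 * b) * |y| := by ring

end Dyadic

def secondDiff (f : ℝ → ℂ) (x y : ℝ) : ℂ := f (x + y) + f (x - y) - 2 * f x

lemma norm_secondDiff_mul_exp (c : ℂ) (θ x y : ℝ) :
    ‖secondDiff (fun x => c * exp (↑(θ * x) * I)) x y‖ = ‖c‖ * (2 - 2 * Real.cos (θ * y)) := by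
  have hsplit : secondDiff (fun x => c * exp (↑(θ * x) * I)) x y =
      c * exp (↑(θ * x) * I) * (2 * cos ↑(θ * y) - 2) := by
    simp only [secondDiff, two_cos, mul_add, mul_sub, ofReal_add, ofReal_sub,
      add_mul, sub_mul, exp_add, exp_sub, neg_mul, exp_neg]
    field_simp
  rw [hsplit, norm_mul, norm_mul, norm_exp_ofReal_mul_I, ← ofReal_cos]
  norm_cast
  rw [Real.norm_eq_abs, abs_of_nonpos (by linarith [Real.cos_le_one (θ * y)])]
  ring

noncomputable def lacunaryTerm (k : ℕ) (x : ℝ) : ℂ :=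
  ((1 : ℂ) / 2) ^ (k + 1) * exp (↑(2 * Real.pi * 2 ^ (k + 1) * x) * I)

lemma lacunary_eq_tsum (x : ℝ) : lacunary x = ∑' k, lacunaryTerm k x := by
  unfold lacunary lacunaryTerm
  push_cast
  ring_nf

lemma norm_lacunaryTerm (k : ℕ) (x : ℝ) : ‖lacunaryTerm k x‖ = (1 / 2) ^ (k + 1) := by
  rw [lacunaryTerm, norm_mul, norm_exp_ofReal_mul_I]
  simp

lemma norm_secondDiff_lacunaryTerm (k : ℕ) (x y : ℝ) :
    ‖secondDiff (lacunaryTerm k) x y‖ =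
      (1 / 2) ^ (k + 1) * (2 - 2 * Real.cos (2 * Real.pi * 2 ^ (k + 1) * y)) :=
  (norm_secondDiff_mul_exp _ _ x y).trans (by simp)

lemma norm_secondDiff_lacunaryTerm_le_sq (k : ℕ) (x y : ℝ) :
    ‖secondDiff (lacunaryTerm k) x y‖ ≤ 8 * Real.pi ^ 2 * 2 ^ k * y ^ 2 := by
  have hcos := Real.one_sub_sq_div_two_le_cos (x := 2 * Real.pi * 2 ^ (k + 1) * y)
  rw [norm_secondDiff_lacunaryTerm]
  calc (1 / 2 : ℝ) ^ (k + 1) * (2 - 2 * Real.cos (2 * Real.pi * 2 ^ (k + 1) * y))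
      ≤ (1 / 2) ^ (k + 1) * (2 * Real.pi * 2 ^ (k + 1) * y) ^ 2 := by gcongr; linarith
    _ = 8 * Real.pi ^ 2 * 2 ^ k * y ^ 2 := by rw [div_pow, one_pow]; field_simp; ring

lemma norm_secondDiff_lacunaryTerm_le_div (k : ℕ) (x y : ℝ) :
    ‖secondDiff (lacunaryTerm k) x y‖ ≤ 2 / 2 ^ k := by
  have hcos := Real.neg_one_le_cos (2 * Real.pi * 2 ^ (k + 1) * y)
  rw [norm_secondDiff_lacunaryTerm]
  calc (1 / 2 : ℝ) ^ (k + 1) * (2 - 2 * Real.cos (2 * Real.pi * 2 ^ (k + 1) * y))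
      ≤ (1 / 2) ^ (k + 1) * 4 := by gcongr; linarith
    _ = 2 / 2 ^ k := by rw [div_pow, one_pow]; field_simp; ring

lemma hasSum_lacunaryTerm (x : ℝ) : HasSum (lacunaryTerm · x) (lacunary x) := by
  rw [lacunary_eq_tsum]
  refine Summable.hasSum (.of_norm ?_)
  simp only [norm_lacunaryTerm, pow_succ]
  exact summable_geometric_two.mul_right _

lemma norm_secondDiff_lacunary_le_tsum (x y : ℝ) :
    ‖secondDiff lacunary x y‖ ≤ ∑' k, ‖secondDiff (lacunaryTerm k) x y‖ :=
  (((hasSum_lacunaryTerm _).add (hasSum_lacunaryTerm _)).sub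
    ((hasSum_lacunaryTerm x).mul_left 2)).norm_le_of_bounded
    (summable_of_nonneg_of_le_div_two_pow (fun _ => norm_nonneg _)
      (norm_secondDiff_lacunaryTerm_le_div · x y)).hasSum fun _ => le_rfl

theorem stmt_17 :
    ∃ C : ℝ, ∀ x y : ℝ,
      ‖lacunary (x + y) + lacunary (x - y) - 2 * lacunary x‖ ≤ C * |y| :=
  ⟨8 * Real.pi ^ 2 + 4 * 2, fun x y => (norm_secondDiff_lacunary_le_tsum x y).trans <|
    tsum_le_mul_abs_of_le_two_pow_mul_sq (fun _ => norm_nonneg _)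
      (norm_secondDiff_lacunaryTerm_le_sq · x y) (norm_secondDiff_lacunaryTerm_le_div · x y)⟩
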